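/- Let R be a ring and M a right R-module. If M is N₁-projective and N₂-projective, then M is (N₁ ⊕ N₂)-projective. -/

import Mathlib

/-!
Given a surjection `p : N₁ × N₂ → C` and `f : M → C`, put `S = p (0 × N₂)`. Since `N₁` surjects
onto `C ⧸ S`, `N₁`-projectivity lifts `f` modulo `S` to some `g₁ : M → N₁`. The error
`f - p ∘ inl ∘ g₁` then lands in `S`, onto which `N₂` surjects, so `N₂`-projectivity lifts it to
`g₂ : M → N₂`, and `(g₁, g₂)` lifts `f`.
-/

universe u v

/-- `M` is `N`-projective: for every surjection `p : N → C` and every `f : M → C`,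
there is `h : M → N` with `p ∘ h = f`. -/
def IsModProjective (R : Type u) [Ring R] (M : Type v) [AddCommGroup M] [Module R M]
    (N : Type v) [AddCommGroup N] [Module R N] : Prop :=
  ∀ (C : Type v) [AddCommGroup C] [Module R C] (p : N →ₗ[R] C), Function.Surjective p →
    ∀ f : M →ₗ[R] C, ∃ h : M →ₗ[R] N, p.comp h = f

open LinearMap

namespace IsModProjective

variable {R : Type u} [Ring R] {M N C : Type v} [AddCommGroup M] [Module R M]
  [AddCommGroup N] [Module R N] [AddCommGroup C] [Module R C]

theorem exists_comp_eq_of_range_le (hM : IsModProjective R M N) (g : N →ₗ[R] C)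
    (f : M →ₗ[R] C) (hf : range f ≤ range g) : ∃ h : M →ₗ[R] N, g ∘ₗ h = f := by
  obtain ⟨h, hh⟩ := hM _ g.rangeRestrict g.surjective_rangeRestrict
    (f.codRestrict _ fun m => hf (mem_range_self f m))
  exact ⟨h, by simpa using congrArg ((range g).subtype ∘ₗ ·) hh⟩

theorem exists_range_sub_comp_le (hM : IsModProjective R M N) (g : N →ₗ[R] C)
    (S : Submodule R C) (hgS : S ⊔ range g = ⊤) (f : M →ₗ[R] C) :
    ∃ h : M →ₗ[R] N, range (f - g ∘ₗ h) ≤ S := by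
  have hsurj : Function.Surjective (S.mkQ ∘ₗ g) := by
    rwa [← range_eq_top, range_comp, Submodule.map_mkQ_eq_top]
  obtain ⟨h, hh⟩ := hM _ _ hsurj (S.mkQ ∘ₗ f)
  refine ⟨h, ?_⟩
  rw [← S.ker_mkQ, range_le_ker_iff, comp_sub, ← hh, comp_assoc, sub_self]

end IsModProjective

/-- If `M` is `N₁`-projective and `N₂`-projective, then `M` is `N₁ ⊕ N₂`-projective. -/
theorem isModProjective_prod
    (R : Type u) [Ring R] (M : Type v) [AddCommGroup M] [Module R M]
    (N₁ N₂ : Type v) [AddCommGroup N₁] [Module R N₁] [AddCommGroup N₂] [Module R N₂]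
    (h₁ : IsModProjective R M N₁) (h₂ : IsModProjective R M N₂) :
    IsModProjective R M (N₁ × N₂) := by
  intro C _ _ p hp f
  have hsup : range (p ∘ₗ inr R N₁ N₂) ⊔ range (p ∘ₗ inl R N₁ N₂) = ⊤ := by
    rw [sup_comm, ← range_coprod, coprod_comp_inl_inr, range_eq_top.2 hp]
  obtain ⟨g₁, hg₁⟩ := h₁.exists_range_sub_comp_le _ _ hsup f
  obtain ⟨g₂, hg₂⟩ := h₂.exists_comp_eq_of_range_le _ _ hg₁
  refine ⟨g₁.prod g₂, ?_⟩
  calc p ∘ₗ g₁.prod g₂ = (p ∘ₗ inl R N₁ N₂) ∘ₗ g₁ + (p ∘ₗ inr R N₁ N₂) ∘ₗ g₂ := by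
        rw [← coprod_comp_prod, coprod_comp_inl_inr]
    _ = f := by rw [hg₂, comp_assoc, add_sub_cancel]
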